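/- Let E = ℝⁿ, let 0 < K ≤ 1, and let F : E → E be K-strongly monotone and (1/K)-Lipschitz. Set L₀ = sqrt((1 + K² − 2K³)/(1 + K² + 2K³)). Then L₀ < 1, and for every L with L₀ ≤ L < 1 and all x₁, x₂ ∈ E, writing p = x₁ − x₂ and q = F x₁ − F x₂, one has ‖q − p‖ ≤ L‖q + p‖. In particular F belongs to the monotone formulation class M_L for some L < 1. -/

import Mathlib

/-!
Strong monotonicity and the Lipschitz bound give `⟪q, p⟫ ≥ K³ / (1 + K²) · (‖q‖² + ‖p‖²)`.
Since `‖q - p‖² ≤ L² ‖q + p‖²` is linear in `⟪q, p⟫` and `‖q‖² + ‖p‖²`, it follows from that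
bound as soon as `(1 - L²)(1 + K²) ≤ 2K³(1 + L²)`, which is exactly `L₀ ≤ L`.
-/

open RealInnerProductSpace

section InnerProductSpace

variable {E : Type*} [NormedAddCommGroup E] [InnerProductSpace ℝ E] {p q : E}

theorem norm_sub_le_mul_norm_add_of_mul_le_inner {c L : ℝ} (hL : 0 ≤ L)
    (hc : c * (‖q‖ ^ 2 + ‖p‖ ^ 2) ≤ ⟪q, p⟫) (hcL : 1 - L ^ 2 ≤ 2 * c * (1 + L ^ 2)) :
    ‖q - p‖ ≤ L * ‖q + p‖ := by
  rw [← pow_le_pow_iff_left₀ (norm_nonneg _) (by positivity) two_ne_zero, mul_pow,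
    norm_sub_sq_real, norm_add_sq_real]
  have hscaled := mul_le_mul_of_nonneg_right hcL (by positivity : 0 ≤ ‖q‖ ^ 2 + ‖p‖ ^ 2)
  have hinner := mul_le_mul_of_nonneg_left hc (by positivity : (0 : ℝ) ≤ 2 * (1 + L ^ 2))
  nlinarith

theorem mul_norm_sq_add_norm_sq_le_inner {K : ℝ} (hK : 0 < K) (hmono : K * ‖p‖ ^ 2 ≤ ⟪q, p⟫)
    (hlip : ‖q‖ ≤ 1 / K * ‖p‖) :
    K ^ 3 / (1 + K ^ 2) * (‖q‖ ^ 2 + ‖p‖ ^ 2) ≤ ⟪q, p⟫ := by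
  have hq : K * ‖q‖ ≤ ‖p‖ := by
    rwa [one_div_mul_eq_div, le_div_iff₀ hK, mul_comm] at hlip
  have hq_sq : K ^ 2 * ‖q‖ ^ 2 ≤ ‖p‖ ^ 2 := by
    rw [← mul_pow]
    exact pow_le_pow_left₀ (by positivity) hq 2
  rw [div_mul_eq_mul_div, div_le_iff₀ (by positivity)]
  nlinarith

end InnerProductSpace

theorem sqrt_threshold_lt_one {K : ℝ} (hK : 0 < K) :
    √((1 + K ^ 2 - 2 * K ^ 3) / (1 + K ^ 2 + 2 * K ^ 3)) < 1 := by
  rw [Real.sqrt_lt' one_pos, one_pow, div_lt_one (by positivity)]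
  nlinarith [pow_pos hK 3]

theorem one_sub_sq_le_of_sqrt_threshold_le {K L : ℝ} (hK : 0 < K)
    (hL : √((1 + K ^ 2 - 2 * K ^ 3) / (1 + K ^ 2 + 2 * K ^ 3)) ≤ L) :
    1 - L ^ 2 ≤ 2 * (K ^ 3 / (1 + K ^ 2)) * (1 + L ^ 2) := by
  obtain ⟨-, hL⟩ := Real.sqrt_le_iff.mp hL
  rw [div_le_iff₀ (by positivity)] at hL
  rw [mul_div_assoc', div_mul_eq_mul_div, le_div_iff₀ (by positivity)]
  nlinarith

theorem strongly_monotone_lipschitz_mem_monotone_formulation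
    (n : ℕ) (K : ℝ) (hK0 : 0 < K)
    (F : EuclideanSpace ℝ (Fin n) → EuclideanSpace ℝ (Fin n))
    (hmono : ∀ x y, ⟪F x - F y, x - y⟫ ≥ K * ‖x - y‖ ^ 2)
    (hlip : ∀ x y, ‖F x - F y‖ ≤ (1 / K) * ‖x - y‖) :
    Real.sqrt ((1 + K ^ 2 - 2 * K ^ 3) / (1 + K ^ 2 + 2 * K ^ 3)) < 1 ∧
    ∀ L : ℝ, Real.sqrt ((1 + K ^ 2 - 2 * K ^ 3) / (1 + K ^ 2 + 2 * K ^ 3)) ≤ L → L < 1 →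
      ∀ x₁ x₂, ‖(F x₁ - F x₂) - (x₁ - x₂)‖ ≤ L * ‖(F x₁ - F x₂) + (x₁ - x₂)‖ := by
  refine ⟨sqrt_threshold_lt_one hK0, fun L hL _ x₁ x₂ => ?_⟩
  exact norm_sub_le_mul_norm_add_of_mul_le_inner ((Real.sqrt_nonneg _).trans hL)
    (mul_norm_sq_add_norm_sq_le_inner hK0 (hmono x₁ x₂) (hlip x₁ x₂))
    (one_sub_sq_le_of_sqrt_threshold_le hK0 hL)
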